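/- arXiv:1703.09879 — 2 statements merged into one kernel-verified Lean document; each statement's English description precedes it below -/
import Mathlib

section
/- Let τ₁(x,y) = x + iy + √3 and τ₂(x,y) = x² + y² + 3 as functions ℝ² → ℂ. Then the Bäcklund transformation relations between τ₁ and τ₂ hold on ℝ²: (Dₓ² − (1/√3)Dₓ + (i/√3)Dᵧ) τ₁·τ₂ = 0 and (−Dₓ + iDᵧ + Dₓ³ − √3 i DₓDᵧ) τ₁·τ₂ = 0. -/
/-!
For fixed `(x, y)` the product `τ₁(x + a, y + b) τ₂(x - a, y - b)` is a cubic polynomial in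
`a` and in `b`, so each Hirota derivative `Dₓ^m Dᵧ^n τ₁·τ₂` is `m! n!` times one of its
coefficients. Reading off these coefficients turns both relations into polynomial identities in
`x`, `y`, `√3` and `i`, which hold because `(√3)² = 3` and `i² = -1`.
-/

open Complex

/-- Hirota bilinear derivative `Dₓ^m Dᵧ^n f·g` for functions of `(x,y) ∈ ℝ²`. -/
noncomputable def hirota (m n : ℕ) (f g : ℝ × ℝ → ℂ) (p : ℝ × ℝ) : ℂ :=
  iteratedDeriv m (fun a =>
    iteratedDeriv n (fun b =>
      f (p.1 + a, p.2 + b) * g (p.1 - a, p.2 - b)) 0) 0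

/-- `τ₁(x,y) = x + iy + √3`. -/
noncomputable def tau1 (p : ℝ × ℝ) : ℂ :=
  (p.1 : ℂ) + (p.2 : ℂ) * I + (Real.sqrt 3 : ℂ)

/-- `τ₂(x,y) = x² + y² + 3`. -/
noncomputable def tau2 (p : ℝ × ℝ) : ℂ :=
  ((p.1 ^ 2 + p.2 ^ 2 + 3 : ℝ) : ℂ)

open Polynomial
open scoped Nat

theorem Polynomial.iteratedDeriv_eval_ofReal (P : ℂ[X]) (k : ℕ) :
    iteratedDeriv k (fun t : ℝ => P.eval (t : ℂ)) =
      fun t : ℝ => (derivative^[k] P).eval (t : ℂ) := by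
  induction k generalizing P with
  | zero => rfl
  | succ k ih =>
    have hderiv :
        deriv (fun t : ℝ => P.eval (t : ℂ)) = fun t : ℝ => (derivative P).eval (t : ℂ) := by
      funext t
      exact (P.hasDerivAt (t : ℂ)).comp_ofReal.deriv
    rw [iteratedDeriv_succ', hderiv, ih, Function.iterate_succ_apply]

theorem Polynomial.iteratedDeriv_eval_ofReal_zero (P : ℂ[X]) (k : ℕ) :
    iteratedDeriv k (fun t : ℝ => P.eval (t : ℂ)) 0 = k ! * P.coeff k := by
  rw [iteratedDeriv_eval_ofReal]
  beta_reduce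
  rw [ofReal_zero, ← coeff_zero_eq_eval_zero, coeff_iterate_derivative,
    zero_add, Nat.descFactorial_self, nsmul_eq_mul]

theorem hirota_eq_factorial_mul_coeff {m n : ℕ} {f g : ℝ × ℝ → ℂ} {p : ℝ × ℝ} {P : ℂ[X]}
    (hP : ∀ a : ℝ,
      iteratedDeriv n (fun b => f (p.1 + a, p.2 + b) * g (p.1 - a, p.2 - b)) 0 = P.eval (a : ℂ)) :
    hirota m n f g p = m ! * P.coeff m := by
  rw [hirota, funext hP, iteratedDeriv_eval_ofReal_zero]

theorem hirota_dx_tau1_tau2 (m : ℕ) (p : ℝ × ℝ) :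
    hirota m 0 tau1 tau2 p = m ! * (Cubic.toPoly
      ⟨1, tau1 p - 2 * p.1, tau2 p - 2 * p.1 * tau1 p, tau1 p * tau2 p⟩).coeff m := by
  refine hirota_eq_factorial_mul_coeff fun a => ?_
  simp only [iteratedDeriv_zero, add_zero, sub_zero, Cubic.toPoly, tau1, tau2, eval_add,
    eval_mul, eval_C, eval_pow, eval_X]
  push_cast
  ring

theorem hirota_dx_dy_tau1_tau2 (m : ℕ) (p : ℝ × ℝ) :
    hirota m 1 tau1 tau2 p = m ! * (Cubic.toPoly
      ⟨0, I, -2 * I * p.1 - 2 * p.2, I * tau2 p - 2 * p.2 * tau1 p⟩).coeff m := by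
  refine hirota_eq_factorial_mul_coeff fun a => ?_
  set U : ℂ := tau1 p + a
  set V : ℂ := tau2 p - 2 * p.1 * a + a ^ 2
  have hinner : ∀ b : ℝ, tau1 (p.1 + a, p.2 + b) * tau2 (p.1 - a, p.2 - b) =
      (Cubic.toPoly ⟨I, U - 2 * I * p.2, I * V - 2 * p.2 * U, U * V⟩).eval (b : ℂ) := by
    intro b
    simp only [U, V, Cubic.toPoly, tau1, tau2, eval_add, eval_mul, eval_C, eval_pow, eval_X]
    push_cast
    ring
  rw [funext hinner, iteratedDeriv_eval_ofReal_zero, Cubic.coeff_eq_c]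
  simp only [U, V, Cubic.toPoly, tau1, tau2, eval_add, eval_mul, eval_C, eval_pow, eval_X]
  push_cast
  ring

/-- The Bäcklund transformation relations between `τ₁` and `τ₂`. -/
theorem backlund_tau1_tau2 :
    (∀ p : ℝ × ℝ,
      hirota 2 0 tau1 tau2 p - (1 / (Real.sqrt 3 : ℂ)) * hirota 1 0 tau1 tau2 p
        + (I / (Real.sqrt 3 : ℂ)) * hirota 0 1 tau1 tau2 p = 0) ∧
    (∀ p : ℝ × ℝ,
      -hirota 1 0 tau1 tau2 p + I * hirota 0 1 tau1 tau2 p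
        + hirota 3 0 tau1 tau2 p
        - (Real.sqrt 3 : ℂ) * I * hirota 1 1 tau1 tau2 p = 0) := by
  have hsqrt : (Real.sqrt 3 : ℂ) ^ 2 = 3 := by
    exact_mod_cast Real.sq_sqrt (by norm_num : (0 : ℝ) ≤ 3)
  have hsqrt_ne : (Real.sqrt 3 : ℂ) ≠ 0 := by
    exact_mod_cast (Real.sqrt_pos.2 (by norm_num : (0 : ℝ) < 3)).ne'
  simp only [hirota_dx_tau1_tau2, hirota_dx_dy_tau1_tau2, Cubic.coeff_eq_a, Cubic.coeff_eq_b,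
    Cubic.coeff_eq_c, Cubic.coeff_eq_d, tau1, tau2]
  push_cast
  refine ⟨fun p => ?_, fun p => ?_⟩
  · field_simp
    linear_combination (2 : ℂ) * hsqrt + (↑p.1 ^ 2 - ↑p.2 ^ 2 + 3) * I_sq
  · linear_combination (↑p.1 ^ 2 - ↑p.2 ^ 2 + 3 + 2 * (Real.sqrt 3 : ℂ) * ↑p.1) * I_sq
end

section
/- Let τ₁(x,y) = x + iy + √3, r = √(x² + y²), and define G₁η = −(Dₓ² + (1/√3)Dₓ + (i/√3)Dᵧ) 1·η and N₁η = −(−Dₓ − iDᵧ + Dₓ³ − √3 i DₓDᵧ) 1·η. (a) If φ, η : ℝ² → ℂ are smooth and satisfy L₁φ = G₁η and M₁φ = N₁η, where L₁φ = (Dₓ² + (1/√3)Dₓ + (i/√3)Dᵧ) φ·τ₁ and M₁φ = (−Dₓ − iDᵧ + Dₓ³ − √3 i DₓDᵧ) φ·τ₁, then −4∂ₓ³η + 2√3 ∂ₓ²η = −M₁φ − √3 L₁φ + 3∂ₓ(L₁φ). (b) If η : ℝ² → ℂ is smooth with G₁η = 0 and N₁η = 0 on ℝ² and |η(x,y)|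 ≤ C(1 + r)^{5/2} for some constant C, then there exist constants c₁, c₂ ∈ ℂ such that η = c₁ + c₂ τ₁. -/
open Complex

/-- Partial derivative in x, for complex valued functions. -/
noncomputable def cdx (f : ℝ × ℝ → ℂ) (p : ℝ × ℝ) : ℂ :=
  deriv (fun x => f (x, p.2)) p.1

/-- `r = √(x² + y²)`. -/
noncomputable def rad (p : ℝ × ℝ) : ℝ := Real.sqrt (p.1 ^ 2 + p.2 ^ 2)

/-- `L₁φ = (Dₓ² + (1/√3)Dₓ + (i/√3)Dᵧ) φ·τ₁`. -/
noncomputable def L1 (φ : ℝ × ℝ → ℂ) (p : ℝ × ℝ) : ℂ :=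
  hirota 2 0 φ tau1 p + (1 / (Real.sqrt 3 : ℂ)) * hirota 1 0 φ tau1 p
    + (I / (Real.sqrt 3 : ℂ)) * hirota 0 1 φ tau1 p

/-- `M₁φ = (−Dₓ − iDᵧ + Dₓ³ − √3 i DₓDᵧ) φ·τ₁`. -/
noncomputable def M1 (φ : ℝ × ℝ → ℂ) (p : ℝ × ℝ) : ℂ :=
  -hirota 1 0 φ tau1 p - I * hirota 0 1 φ tau1 p + hirota 3 0 φ tau1 p
    - (Real.sqrt 3 : ℂ) * I * hirota 1 1 φ tau1 p

/-- `G₁η = −(Dₓ² + (1/√3)Dₓ + (i/√3)Dᵧ) 1·η`. -/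
noncomputable def G1 (η : ℝ × ℝ → ℂ) (p : ℝ × ℝ) : ℂ :=
  -(hirota 2 0 (fun _ => 1) η p + (1 / (Real.sqrt 3 : ℂ)) * hirota 1 0 (fun _ => 1) η p
    + (I / (Real.sqrt 3 : ℂ)) * hirota 0 1 (fun _ => 1) η p)

/-- `N₁η = −(−Dₓ − iDᵧ + Dₓ³ − √3 i DₓDᵧ) 1·η`. -/
noncomputable def N1 (η : ℝ × ℝ → ℂ) (p : ℝ × ℝ) : ℂ :=
  -(-hirota 1 0 (fun _ => 1) η p - I * hirota 0 1 (fun _ => 1) η p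
    + hirota 3 0 (fun _ => 1) η p
    - (Real.sqrt 3 : ℂ) * I * hirota 1 1 (fun _ => 1) η p)

/-!
With `τ₀ = 1` the Hirota derivatives `Dₓᵐ Dᵧⁿ 1·η` are just `(-1)ᵐ⁺ⁿ ∂ₓᵐ ∂ᵧⁿ η`, so `G₁` and `N₁`
are linear differential operators with constant coefficients, and (a) is the observation that
`-N₁ - √3 G₁ + 3 ∂ₓ G₁` cancels `η_x`, `η_y` and `η_xy`, leaving `-4 η_xxx + 2√3 η_xx`.

For (b) the same identity gives `η_xxx = (√3/2) η_xx`, so on every horizontal line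
`η = A + B x + γ e^{√3 x / 2}`, and polynomial growth forces `γ = 0`, i.e. `η_xx = 0`.
Then `G₁ η = 0` becomes the Cauchy–Riemann equation `η_x + i η_y = 0` and `∂ₓ G₁ η = 0` gives
`η_xy = 0`; hence `η_x` is a constant `b`, `η_y = i b`, and `η - b τ₁` is constant.
-/

open Filter Asymptotics

noncomputable def cdy (f : ℝ × ℝ → ℂ) (p : ℝ × ℝ) : ℂ :=
  deriv (fun y => f (p.1, y)) p.2

section PartialDerivatives

variable {f g : ℝ × ℝ → ℂ} {p : ℝ × ℝ}

theorem cdx_eq_fderiv (hf : DifferentiableAt ℝ f p) : cdx f p = fderiv ℝ f p (1, 0) := by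
  have h : HasDerivAt (fun x : ℝ => (x, p.2)) (1, 0) p.1 :=
    (hasDerivAt_id p.1).prodMk (hasDerivAt_const p.1 p.2)
  exact (hf.hasFDerivAt.comp_hasDerivAt p.1 h).deriv

theorem cdy_eq_fderiv (hf : DifferentiableAt ℝ f p) : cdy f p = fderiv ℝ f p (0, 1) := by
  have h : HasDerivAt (fun y : ℝ => (p.1, y)) (0, 1) p.2 :=
    (hasDerivAt_const p.2 p.1).prodMk (hasDerivAt_id p.2)
  exact (hf.hasFDerivAt.comp_hasDerivAt p.2 h).deriv

theorem contDiff_cdx {m n : WithTop ℕ∞} (hf : ContDiff ℝ n f) (hmn : m + 1 ≤ n) :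
    ContDiff ℝ m (cdx f) := by
  have hd : Differentiable ℝ f := (hf.of_le (le_add_self.trans hmn)).differentiable one_ne_zero
  rw [show cdx f = fun p => fderiv ℝ f p (1, 0) from funext fun p => cdx_eq_fderiv (hd p)]
  exact (hf.fderiv_right hmn).clm_apply contDiff_const

theorem contDiff_cdy {m n : WithTop ℕ∞} (hf : ContDiff ℝ n f) (hmn : m + 1 ≤ n) :
    ContDiff ℝ m (cdy f) := by
  have hd : Differentiable ℝ f := (hf.of_le (le_add_self.trans hmn)).differentiable one_ne_zero
  rw [show cdy f = fun p => fderiv ℝ f p (0, 1) from funext fun p => cdy_eq_fderiv (hd p)]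
  exact (hf.fderiv_right hmn).clm_apply contDiff_const

theorem Differentiable.comp_left_prodMk (hf : Differentiable ℝ f) (y : ℝ) :
    Differentiable ℝ fun x => f (x, y) :=
  hf.comp (differentiable_id.prodMk (differentiable_const y))

theorem Differentiable.comp_right_prodMk (hf : Differentiable ℝ f) (x : ℝ) :
    Differentiable ℝ fun y => f (x, y) :=
  hf.comp ((differentiable_const x).prodMk differentiable_id)

theorem Differentiable.hasDerivAt_cdx (hf : Differentiable ℝ f) (p : ℝ × ℝ) :
    HasDerivAt (fun x => f (x, p.2)) (cdx f p) p.1 :=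
  (hf.comp_left_prodMk p.2 p.1).hasDerivAt

theorem cdx_sub (hf : Differentiable ℝ f) (hg : Differentiable ℝ g) (p : ℝ × ℝ) :
    cdx (fun q => f q - g q) p = cdx f p - cdx g p :=
  deriv_sub (hf.comp_left_prodMk p.2 p.1) (hg.comp_left_prodMk p.2 p.1)

theorem cdy_sub (hf : Differentiable ℝ f) (hg : Differentiable ℝ g) (p : ℝ × ℝ) :
    cdy (fun q => f q - g q) p = cdy f p - cdy g p :=
  deriv_sub (hf.comp_right_prodMk p.1 p.2) (hg.comp_right_prodMk p.1 p.2)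

theorem cdx_const_mul (a : ℂ) (f : ℝ × ℝ → ℂ) (p : ℝ × ℝ) :
    cdx (fun q => a * f q) p = a * cdx f p :=
  deriv_const_mul_field a

theorem cdy_const_mul (a : ℂ) (f : ℝ × ℝ → ℂ) (p : ℝ × ℝ) :
    cdy (fun q => a * f q) p = a * cdy f p :=
  deriv_const_mul_field a

theorem cdy_cdx_comm (hf : ContDiff ℝ 2 f) (p : ℝ × ℝ) : cdy (cdx f) p = cdx (cdy f) p := by
  have hd : Differentiable ℝ f := hf.differentiable (by norm_num)
  have hd2 : DifferentiableAt ℝ (fderiv ℝ f) p :=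
    (hf.fderiv_right (m := 1) le_rfl).differentiable one_ne_zero p
  rw [show cdx f = fun q => fderiv ℝ f q (1, 0) from funext fun q => cdx_eq_fderiv (hd q),
    show cdy f = fun q => fderiv ℝ f q (0, 1) from funext fun q => cdy_eq_fderiv (hd q),
    cdy_eq_fderiv (hd2.clm_apply (differentiableAt_const _)),
    cdx_eq_fderiv (hd2.clm_apply (differentiableAt_const _)),
    fderiv_clm_apply hd2 (differentiableAt_const _),
    fderiv_clm_apply hd2 (differentiableAt_const _)]
  simpa using (hf.contDiffAt.isSymmSndFDerivAt (by simp)) (0, 1) (1, 0)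

theorem eq_of_cdx_eq_zero_of_cdy_eq_zero (hf : Differentiable ℝ f) (hx : ∀ p, cdx f p = 0)
    (hy : ∀ p, cdy f p = 0) (p q : ℝ × ℝ) : f p = f q := by
  refine is_const_of_fderiv_eq_zero hf (fun r => ?_) p q
  ext
  · simpa [← cdx_eq_fderiv (hf r)] using hx r
  · simpa [← cdy_eq_fderiv (hf r)] using hy r

theorem iteratedDeriv_comp_left_prodMk (n : ℕ) (f : ℝ × ℝ → ℂ) (x y : ℝ) :
    iteratedDeriv n (fun x => f (x, y)) x = cdx^[n] f (x, y) := by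
  induction n generalizing x with
  | zero => simp
  | succ n ih =>
    rw [iteratedDeriv_succ, Function.iterate_succ_apply']
    exact congrArg (deriv · x) (funext ih)

end PartialDerivatives

section Hirota

variable (η : ℝ × ℝ → ℂ) (p : ℝ × ℝ)

theorem hirota_one_left (m n : ℕ) :
    hirota m n (fun _ => 1) η p
      = (-1) ^ (m + n)
        * iteratedDeriv m (fun x => iteratedDeriv n (fun y => η (x, y)) p.2) p.1 := by
  have inner (a : ℝ) : iteratedDeriv n (fun b => η (p.1 - a, p.2 - b)) 0
      = (-1) ^ n * iteratedDeriv n (fun y => η (p.1 - a, y)) p.2 := by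
    simp [iteratedDeriv_comp_const_sub n (fun y => η (p.1 - a, y)) p.2]
  simp only [hirota, one_mul, inner, iteratedDeriv_const_mul_field]
  simp only [iteratedDeriv_comp_const_sub m (fun x => iteratedDeriv n (fun y => η (x, y)) p.2) p.1,
    sub_zero, real_smul, ofReal_pow, ofReal_neg, ofReal_one, pow_add]
  ring

theorem hirota_one_left_iterate_cdx (m : ℕ) :
    hirota m 0 (fun _ => 1) η p = (-1) ^ m * cdx^[m] η p := by
  simp [hirota_one_left, iteratedDeriv_comp_left_prodMk _ _ p.1 p.2]

theorem hirota_one_left_zero_one : hirota 0 1 (fun _ => 1) η p = -cdy η p := by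
  simp [hirota_one_left, cdy]

theorem hirota_one_left_one_one : hirota 1 1 (fun _ => 1) η p = cdx (cdy η) p := by
  simp only [hirota_one_left, Nat.reduceAdd, even_two, Even.neg_pow, one_pow, iteratedDeriv_one,
    one_mul]
  rfl

theorem G1_apply :
    G1 η p = -cdx (cdx η) p + (cdx η p + I * cdy η p) / Real.sqrt 3 := by
  simp only [G1, hirota_one_left_iterate_cdx, hirota_one_left_zero_one, Function.iterate_succ_apply,
    Function.iterate_zero_apply]
  ring

theorem N1_apply : N1 η p
    = cdx (cdx (cdx η)) p + Real.sqrt 3 * I * cdx (cdy η) p - (cdx η p + I * cdy η p) := by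
  simp only [N1, hirota_one_left_iterate_cdx, hirota_one_left_zero_one, hirota_one_left_one_one,
    Function.iterate_succ_apply, Function.iterate_zero_apply]
  ring

end Hirota

section Elimination

variable {η : ℝ × ℝ → ℂ}

theorem cdx_G1 (hη : ContDiff ℝ 3 η) (p : ℝ × ℝ) :
    cdx (G1 η) p = -cdx (cdx (cdx η)) p + (cdx (cdx η) p + I * cdx (cdy η) p) / Real.sqrt 3 := by
  have h2 : ContDiff ℝ 2 (cdx η) := contDiff_cdx hη (by norm_num)
  have hxx := ((contDiff_cdx h2 (m := 1) (by norm_num)).differentiable one_ne_zero).hasDerivAt_cdx p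
  have hx := (h2.differentiable two_ne_zero).hasDerivAt_cdx p
  have hy := ((contDiff_cdy hη (m := 2) (by norm_num)).differentiable two_ne_zero).hasDerivAt_cdx p
  rw [show G1 η = _ from funext (G1_apply η)]
  exact (hxx.neg.add ((hx.add (hy.const_mul I)).div_const _)).deriv

theorem G1_N1_elimination (hη : ContDiff ℝ 3 η) (p : ℝ × ℝ) :
    -4 * cdx (cdx (cdx η)) p + 2 * (Real.sqrt 3 : ℂ) * cdx (cdx η) p
      = -N1 η p - (Real.sqrt 3 : ℂ) * G1 η p + 3 * cdx (G1 η) p := by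
  have h3 : (Real.sqrt 3 : ℂ) ^ 2 = 3 := by norm_cast; simp
  have h0 : (Real.sqrt 3 : ℂ) ≠ 0 := by norm_cast; positivity
  rw [N1_apply, G1_apply, cdx_G1 hη]
  field_simp
  linear_combination (cdx (cdx η) p + I * cdx (cdy η) p) * h3

end Elimination

section OneVariable

variable {u : ℝ → ℂ}

theorem deriv_ofReal (x : ℝ) : deriv (fun t : ℝ => (t : ℂ)) x = 1 := by
  simpa using (hasDerivAt_id x).ofReal_comp.deriv

theorem hasDerivAt_const_mul_ofReal (c : ℂ) (x : ℝ) : HasDerivAt (fun t : ℝ => c * t) c x := by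
  simpa using (hasDerivAt_id x).ofReal_comp.const_mul c

theorem eq_mul_cexp_of_deriv_eq_mul {c : ℂ} (hu : Differentiable ℝ u)
    (h : ∀ x, deriv u x = c * u x) (x : ℝ) : u x = u 0 * cexp (c * x) := by
  have hd (t : ℝ) : HasDerivAt (fun t : ℝ => u t * cexp (-c * t)) 0 t := by
    have := (hu t).hasDerivAt.fun_mul (hasDerivAt_const_mul_ofReal (-c) t).cexp
    rw [h t] at this
    exact this.congr_deriv (by ring)
  have hconst := is_const_of_deriv_eq_zero (fun t => (hd t).differentiableAt)
    (fun t => (hd t).deriv) x 0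
  calc u x = u x * cexp (-c * x) * cexp (c * x) := by
        rw [mul_assoc, ← Complex.exp_add, neg_mul, neg_add_cancel, Complex.exp_zero, mul_one]
    _ = u 0 * cexp (c * x) := by rw [hconst]; simp

theorem iteratedDeriv_cexp_const_mul_ofReal (n : ℕ) (c : ℂ) (x : ℝ) :
    iteratedDeriv n (fun t : ℝ => cexp (c * t)) x = c ^ n * cexp (c * x) := by
  induction n generalizing x with
  | zero => simp
  | succ n ih =>
    rw [iteratedDeriv_succ, funext ih, deriv_const_mul_field, pow_succ, mul_assoc,
      (hasDerivAt_const_mul_ofReal c x).cexp.deriv, mul_comm (cexp _)]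

theorem exists_eq_add_mul_of_iteratedDeriv_two_eq_zero (hu : ContDiff ℝ 2 u)
    (h : ∀ x, iteratedDeriv 2 u x = 0) : ∃ A B : ℂ, ∀ x : ℝ, u x = A + B * x := by
  have hu' : Differentiable ℝ (deriv u) := by
    simpa using hu.differentiable_iteratedDeriv 1 (by norm_num)
  have hB (x : ℝ) : deriv u x = deriv u 0 :=
    is_const_of_deriv_eq_zero hu' (fun x => by simpa [iteratedDeriv_succ] using h x) x 0
  have hv (x : ℝ) : HasDerivAt (fun x : ℝ => u x - deriv u 0 * x) 0 x := by
    simpa only [hB x, sub_self] using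
      ((hu.differentiable two_ne_zero) x).hasDerivAt.fun_sub
        (hasDerivAt_const_mul_ofReal (deriv u 0) x)
  refine ⟨u 0, deriv u 0, fun x => ?_⟩
  have := is_const_of_deriv_eq_zero (fun t => (hv t).differentiableAt) (fun t => (hv t).deriv) x 0
  simp only [Complex.ofReal_zero, mul_zero, sub_zero] at this
  linear_combination this

theorem eq_zero_of_isBigO_rpow {A B γ : ℂ} {c s : ℝ} (hc : 0 < c)
    (h : (fun x : ℝ => A + B * x + γ * cexp (c * x)) =O[atTop] fun x => x ^ s) : γ = 0 := by
  have hlin : (fun x : ℝ => A + B * x) =O[atTop] fun x : ℝ => x ^ 1 := by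
    refine IsBigO.of_bound (‖A‖ + ‖B‖) ?_
    filter_upwards [eventually_ge_atTop (1 : ℝ)] with x hx
    calc ‖A + B * x‖ ≤ ‖A‖ + ‖B‖ * x := by
          simpa [abs_of_nonneg (zero_le_one.trans hx)] using norm_add_le A (B * x)
      _ ≤ (‖A‖ + ‖B‖) * ‖x ^ 1‖ := by
          rw [pow_one, Real.norm_of_nonneg (zero_le_one.trans hx)]
          nlinarith [norm_nonneg A, norm_nonneg B]
  have hexp : (fun x : ℝ => γ * cexp (c * x)) =o[atTop] fun x => Real.exp (c * x) := by
    simpa using (h.trans_isLittleO (isLittleO_rpow_exp_pos_mul_atTop s hc)).sub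
      (hlin.trans_isLittleO (isLittleO_pow_exp_pos_mul_atTop 1 hc))
  by_contra hγ
  refine isLittleO_irrefl (l := atTop) (.of_forall fun x => (Real.exp_pos (c * x)).ne') ?_
  rw [← isLittleO_const_mul_left_iff (norm_ne_zero_iff.mpr hγ)]
  simpa [Complex.norm_exp] using hexp.norm_left

theorem iteratedDeriv_two_eq_zero_of_isBigO_rpow {c s : ℝ} (hc : 0 < c) (hu : ContDiff ℝ 3 u)
    (h : ∀ x, iteratedDeriv 3 u x = c * iteratedDeriv 2 u x)
    (hb : u =O[atTop] fun x => x ^ s) (x : ℝ) : iteratedDeriv 2 u x = 0 := by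
  set w := iteratedDeriv 2 u 0
  have hw (x : ℝ) : iteratedDeriv 2 u x = w * cexp (c * x) :=
    eq_mul_cexp_of_deriv_eq_mul (hu.differentiable_iteratedDeriv 2 (by norm_num))
      (fun x => by rw [← iteratedDeriv_succ]; exact h x) x
  have hc0 : (c : ℂ) ≠ 0 := by exact_mod_cast hc.ne'
  have hexp : ContDiff ℝ 2 fun x : ℝ => w / c ^ 2 * cexp (c * x) :=
    contDiff_const.mul (Complex.contDiff_exp.comp (contDiff_const.mul Complex.ofRealCLM.contDiff))
  have hu2 : ContDiff ℝ 2 u := hu.of_le (by norm_num)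
  obtain ⟨A, B, hAB⟩ := exists_eq_add_mul_of_iteratedDeriv_two_eq_zero (hu2.sub hexp) fun x => by
    rw [iteratedDeriv_fun_sub hu2.contDiffAt hexp.contDiffAt, iteratedDeriv_const_mul_field,
      iteratedDeriv_cexp_const_mul_ofReal, hw]
    field_simp
    ring
  have hγ : w / c ^ 2 = 0 :=
    eq_zero_of_isBigO_rpow (A := A) (B := B) hc (hb.congr_left fun x => by linear_combination hAB x)
  rw [hw, (div_eq_zero_iff.mp hγ).resolve_right (pow_ne_zero 2 hc0), zero_mul]

end OneVariable

theorem contDiff_tau1 : ContDiff ℝ ⊤ tau1 :=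
  ((ofRealCLM.contDiff.comp contDiff_fst).add
    ((ofRealCLM.contDiff.comp contDiff_snd).mul contDiff_const)).add contDiff_const

theorem cdx_tau1 (p : ℝ × ℝ) : cdx tau1 p = 1 := by
  simp [cdx, tau1, deriv_ofReal]

theorem cdy_tau1 (p : ℝ × ℝ) : cdy tau1 p = I := by
  simp [cdy, tau1, deriv_ofReal]

theorem rad_le_abs_add_abs (p : ℝ × ℝ) : rad p ≤ |p.1| + |p.2| := by
  rw [rad, Real.sqrt_le_left (by positivity)]
  nlinarith [sq_abs p.1, sq_abs p.2, abs_nonneg p.1, abs_nonneg p.2]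

section Growth

variable {η : ℝ × ℝ → ℂ}

theorem isBigO_rpow_of_norm_le_rad {C s : ℝ} (hb : ∀ p, ‖η p‖ ≤ C * (1 + rad p) ^ s) (hs : 0 ≤ s)
    (y : ℝ) :
    (fun x => η (x, y)) =O[atTop] fun x => x ^ s := by
  have hC : 0 ≤ C := by
    have hrad : 0 < (1 + rad 0) ^ s := by unfold rad; positivity
    exact (mul_nonneg_iff_of_pos_right hrad).mp ((norm_nonneg _).trans (hb 0))
  refine IsBigO.of_bound (C * 2 ^ s) ?_
  filter_upwards [eventually_ge_atTop (1 + |y|)] with x hx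
  have hx0 : 0 ≤ x := by linarith [abs_nonneg y]
  calc ‖η (x, y)‖ ≤ C * (1 + rad (x, y)) ^ s := hb (x, y)
    _ ≤ C * (2 * x) ^ s := by
      gcongr
      · unfold rad; positivity
      · linarith [rad_le_abs_add_abs (x, y), abs_of_nonneg hx0]
    _ = C * 2 ^ s * ‖x ^ s‖ := by
      rw [Real.mul_rpow zero_le_two hx0, Real.norm_of_nonneg (Real.rpow_nonneg hx0 s)]; ring

end Growth

section Solutions

variable {η : ℝ × ℝ → ℂ}

theorem cdx_cdx_eq_zero_of_G1_N1_eq_zero {s : ℝ} (hη : ContDiff ℝ 3 η) (hG : ∀ p, G1 η p = 0)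
    (hN : ∀ p, N1 η p = 0) (hb : ∀ y, (fun x => η (x, y)) =O[atTop] fun x => x ^ s)
    (p : ℝ × ℝ) : cdx (cdx η) p = 0 := by
  have hcdxG : ∀ q, cdx (G1 η) q = 0 := by simp [cdx, show G1 η = 0 from funext hG]
  have hode (x : ℝ) : iteratedDeriv 3 (fun x => η (x, p.2)) x
      = ↑(Real.sqrt 3 / 2) * iteratedDeriv 2 (fun x => η (x, p.2)) x := by
    have := G1_N1_elimination hη (x, p.2)
    rw [hN, hG, hcdxG] at this
    simp only [iteratedDeriv_comp_left_prodMk, Function.iterate_succ_apply',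
      Function.iterate_zero_apply]
    push_cast
    linear_combination -this / 4
  have hu : ContDiff ℝ 3 fun x => η (x, p.2) := hη.comp (contDiff_id.prodMk contDiff_const)
  simpa [iteratedDeriv_comp_left_prodMk] using
    iteratedDeriv_two_eq_zero_of_isBigO_rpow (by positivity) hu hode (hb p.2) p.1

theorem exists_eq_const_add_mul_tau1 (hη : ContDiff ℝ 2 η) (hxx : ∀ p, cdx (cdx η) p = 0)
    (hxy : ∀ p, cdx (cdy η) p = 0) (hcr : ∀ p, cdx η p + I * cdy η p = 0) :
    ∃ c₁ c₂ : ℂ, ∀ p, η p = c₁ + c₂ * tau1 p := by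
  have hd : Differentiable ℝ η := hη.differentiable two_ne_zero
  have hx (p : ℝ × ℝ) : cdx η p = cdx η 0 :=
    eq_of_cdx_eq_zero_of_cdy_eq_zero ((contDiff_cdx hη (m := 1) (by norm_num)).differentiable
      one_ne_zero) hxx (fun p => (cdy_cdx_comm hη p).trans (hxy p)) p 0
  set b := cdx η 0
  have hy (p : ℝ × ℝ) : cdy η p = I * b := by
    linear_combination (-I) * hcr p + I * hx p + cdy η p * I_mul_I
  have hτ : Differentiable ℝ fun q => b * tau1 q :=
    (contDiff_const.mul contDiff_tau1).differentiable (by simp)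
  refine ⟨η 0 - b * tau1 0, b, fun p => ?_⟩
  have := eq_of_cdx_eq_zero_of_cdy_eq_zero (hd.fun_sub hτ)
    (fun q => by rw [cdx_sub hd hτ, cdx_const_mul, cdx_tau1, hx]; ring)
    (fun q => by rw [cdy_sub hd hτ, cdy_const_mul, cdy_tau1, hy]; ring) p 0
  linear_combination this

theorem exists_eq_const_add_mul_tau1_of_G1_eq_zero (hη : ContDiff ℝ 3 η) (hG : ∀ p, G1 η p = 0)
    (hxx : ∀ p, cdx (cdx η) p = 0) : ∃ c₁ c₂ : ℂ, ∀ p, η p = c₁ + c₂ * tau1 p := by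
  have h0 : (Real.sqrt 3 : ℂ) ≠ 0 := by norm_cast; positivity
  refine exists_eq_const_add_mul_tau1 (hη.of_le (by norm_num)) hxx (fun p => ?_) (fun p => ?_)
  · have := cdx_G1 hη p
    rw [show G1 η = 0 from funext hG, show cdx (cdx η) = 0 from funext hxx] at this
    simpa [cdx, h0] using this.symm
  · have := G1_apply η p
    rw [hG, hxx] at this
    field_simp at this
    linear_combination -this

end Solutions

/-- (a) Elimination identity for the linearized Bäcklund system between `τ₀ = 1`
and `τ₁`; (b) polynomially bounded solutions of the homogeneous system
`G₁η = N₁η = 0` are exactly the linear combinations of `1` and `τ₁`. -/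
theorem reverse_backlund_tau0_tau1 :
    (∀ φ η : ℝ × ℝ → ℂ, ContDiff ℝ (⊤ : ℕ∞) φ → ContDiff ℝ (⊤ : ℕ∞) η →
      (∀ p : ℝ × ℝ, L1 φ p = G1 η p) → (∀ p : ℝ × ℝ, M1 φ p = N1 η p) →
      ∀ p : ℝ × ℝ,
        -4 * cdx (cdx (cdx η)) p + 2 * (Real.sqrt 3 : ℂ) * cdx (cdx η) p
          = -M1 φ p - (Real.sqrt 3 : ℂ) * L1 φ p + 3 * cdx (fun q => L1 φ q) p) ∧
    (∀ η : ℝ × ℝ → ℂ, ContDiff ℝ (⊤ : ℕ∞) η →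
      (∀ p : ℝ × ℝ, G1 η p = 0) → (∀ p : ℝ × ℝ, N1 η p = 0) →
      (∃ C : ℝ, ∀ p : ℝ × ℝ, ‖η p‖ ≤ C * (1 + rad p) ^ ((5 : ℝ) / 2)) →
      ∃ c₁ c₂ : ℂ, ∀ p : ℝ × ℝ, η p = c₁ + c₂ * tau1 p) := by
  constructor
  · intro φ η _ hη hL hM p
    rw [hM, hL, show (fun q => L1 φ q) = G1 η from funext hL]
    exact G1_N1_elimination (hη.of_le (by norm_cast)) p
  · rintro η hη hG hN ⟨C, hC⟩
    have hη3 : ContDiff ℝ 3 η := hη.of_le (by norm_cast)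
    exact exists_eq_const_add_mul_tau1_of_G1_eq_zero hη3 hG
      (cdx_cdx_eq_zero_of_G1_N1_eq_zero hη3 hG hN (isBigO_rpow_of_norm_le_rad hC (by norm_num)))
end
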